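/- Let (H_X, H_Z) be a CSS code having at least one X logical operator and at least one Z logical operator, with distances d_X and d_Z, and let ℓ ≥ 2. Take H_C = H_R, the (ℓ−1) × ℓ parity check matrix of the [ℓ,1,ℓ] repetition code (rows e_j + e_{j+1}), which has full row rank and ker(H_R) = span{1_ℓ}. Let H'_X, H'_Z be the check matrices of the generalized thickened code built from (H_X, H_Z) and H_R. Then the thickened code has X distance ℓ·d_X and Z distance d_Z: the minimum Hamming weight over ker(H'_Z) \ rowspan(H'_X) equals ℓ·d_X, and the minimum Hamming weight over ker(H'_X) \ rowspan(H'_Z) equals d_Z. -/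
import Mathlib


open Matrix

/-- The `F₂`-span of the rows of a matrix. -/
noncomputable def rowSpan {ι κ : Type*} [Fintype ι] [Fintype κ] (M : Matrix ι κ (ZMod 2)) :
    Submodule (ZMod 2) (κ → ZMod 2) :=
  Submodule.span (ZMod 2) (Set.range fun i => M i)

/-- The kernel `{v : M v = 0}` of a matrix, as a submodule. -/
noncomputable def kerMat {ι κ : Type*} [Fintype ι] [Fintype κ] (M : Matrix ι κ (ZMod 2)) :
    Submodule (ZMod 2) (κ → ZMod 2) :=
  LinearMap.ker M.mulVecLin

/-- The logical operators `ker(Hker) \ rowspan(Hspan)`. -/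
def logicalSet {ι₁ ι₂ κ : Type*} [Fintype ι₁] [Fintype ι₂] [Fintype κ]
    (Hker : Matrix ι₁ κ (ZMod 2)) (Hspan : Matrix ι₂ κ (ZMod 2)) : Set (κ → ZMod 2) :=
  {v | Hker.mulVec v = 0 ∧ v ∉ rowSpan Hspan}

/-- Minimum Hamming weight over a set of vectors. -/
noncomputable def minWt {ι : Type*} [Fintype ι] (S : Set (ι → ZMod 2)) : ℕ :=
  sInf (hammingNorm '' S)

/-- Parity check matrix of the `[q,1,q]` repetition code: row `j` is `e_j + e_{j+1}`. -/
def repCheck (q : ℕ) : Matrix (Fin (q - 1)) (Fin q) (ZMod 2) :=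
  Matrix.of fun j c => if c.val = j.val ∨ c.val = j.val + 1 then 1 else 0

/-- X check matrix of the generalized thickened code: `( H_X ⊗ I_{n_c} | I_{n_X} ⊗ H_Cᵀ )`.
Region A qubits are indexed by `Fin n × Fin nc`, region B qubits by `Fin nX × Fin r`. -/
def thickX {nX n r nc : ℕ} (HX : Matrix (Fin nX) (Fin n) (ZMod 2))
    (HC : Matrix (Fin r) (Fin nc) (ZMod 2)) :
    Matrix (Fin nX × Fin nc) ((Fin n × Fin nc) ⊕ (Fin nX × Fin r)) (ZMod 2) :=
  Matrix.of fun s p =>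
    match p with
    | Sum.inl (i, c) => if c = s.2 then HX s.1 i else 0
    | Sum.inr (x, j) => if x = s.1 then HC j s.2 else 0

/-- Z check matrix of the generalized thickened code:
first block row `( H_Z ⊗ I_{n_c} | 0 )`,
second block row `( I_n ⊗ H_C | H_Xᵀ ⊗ I_{n_c-k_c} )`. -/
def thickZ {nX nZ n r nc : ℕ} (HX : Matrix (Fin nX) (Fin n) (ZMod 2))
    (HZ : Matrix (Fin nZ) (Fin n) (ZMod 2)) (HC : Matrix (Fin r) (Fin nc) (ZMod 2)) :
    Matrix ((Fin nZ × Fin nc) ⊕ (Fin n × Fin r)) ((Fin n × Fin nc) ⊕ (Fin nX × Fin r)) (ZMod 2) :=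
  Matrix.of fun s p =>
    match s, p with
    | Sum.inl (z, c), Sum.inl (i, c') => if c' = c then HZ z i else 0
    | Sum.inl _, Sum.inr _ => 0
    | Sum.inr (i, j), Sum.inl (i', c) => if i' = i then HC j c else 0
    | Sum.inr (i, j), Sum.inr (x, j') => if j' = j then HX x i else 0


open Finset

set_option linter.unreachableTactic false
set_option linter.unusedTactic false



lemma hn_eq {ι : Type*} [Fintype ι] (f : ι → ZMod 2) :
    hammingNorm f = ∑ i, if f i ≠ 0 then 1 else 0 := by
  rw [hammingNorm, Finset.card_filter]

lemma mem_rowSpan_iff {ι κ : Type*} [Fintype ι] [Fintype κ] (M : Matrix ι κ (ZMod 2))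
    (v : κ → ZMod 2) :
    v ∈ rowSpan M ↔ ∃ l : ι → ZMod 2, ∀ k, v k = ∑ i, l i * M i k := by
  rw [rowSpan, Submodule.mem_span_range_iff_exists_fun]
  constructor
  · rintro ⟨c, hc⟩
    refine ⟨c, fun k => ?_⟩
    rw [← hc]
    simp [Finset.sum_apply]
  · rintro ⟨l, hl⟩
    refine ⟨l, funext fun k => ?_⟩
    simp [Finset.sum_apply, (hl k).symm]

lemma mulVec_eq_sum' {ι κ : Type*} [Fintype ι] [Fintype κ] (M : Matrix ι κ (ZMod 2))
    (v : κ → ZMod 2) (i : ι) : M.mulVec v i = ∑ k, M i k * v k := rfl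

lemma ind_sum_le {ι : Type*} [Fintype ι] (f : ι → ZMod 2) :
    (if (∑ i, f i) ≠ 0 then 1 else 0) ≤ ∑ i, if f i ≠ 0 then 1 else 0 := by
  by_cases h : ∀ i, f i = 0
  · simp [Finset.sum_congr rfl fun i _ => h i]
  · push_neg at h
    obtain ⟨i, hi⟩ := h
    calc (if (∑ i, f i) ≠ 0 then 1 else 0) ≤ 1 := by split <;> omega
    _ ≤ ∑ i, if f i ≠ 0 then 1 else 0 := by
        calc (1:ℕ) = if f i ≠ 0 then 1 else 0 := by simp [hi]
        _ ≤ _ := Finset.single_le_sum (f := fun i => if f i ≠ 0 then 1 else 0)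
            (by intros; positivity) (mem_univ i)



def ext0 {ℓ : ℕ} (μ : Fin (ℓ-1) → ZMod 2) (t : ℕ) : ZMod 2 :=
  if h : t < ℓ - 1 then μ ⟨t, h⟩ else 0

lemma rep_rowsum {ℓ : ℕ} (j : Fin (ℓ-1)) (ν : Fin ℓ → ZMod 2) (h1 : j.val < ℓ)
    (h2 : j.val + 1 < ℓ) :
    ∑ c, repCheck ℓ j c * ν c = ν ⟨j.val, h1⟩ + ν ⟨j.val + 1, h2⟩ := by
  have key : ∀ c : Fin ℓ, repCheck ℓ j c * ν c =
      (if c = ⟨j.val, h1⟩ then ν c else 0) + (if c = ⟨j.val + 1, h2⟩ then ν c else 0) := by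
    intro c
    simp only [repCheck, Matrix.of_apply, Fin.ext_iff]
    by_cases e1 : c.val = j.val <;> by_cases e2 : c.val = j.val + 1 <;>
      simp [e1, e2] <;> omega
  rw [Finset.sum_congr rfl (fun c _ => key c), Finset.sum_add_distrib,
    Finset.sum_ite_eq', Finset.sum_ite_eq']
  simp

lemma sum_ite_val {m t : ℕ} (μ : Fin m → ZMod 2) :
    (∑ j : Fin m, if j.val = t then μ j else 0) = if h : t < m then μ ⟨t, h⟩ else 0 := by
  split_ifs with h
  · rw [Finset.sum_eq_single ⟨t, h⟩]
    · simp
    · intro j _ hj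
      simp only [ite_eq_right_iff]
      intro hv; exact absurd (Fin.ext hv) hj
    · simp
  · apply Finset.sum_eq_zero
    intro j _
    have := j.isLt
    simp only [ite_eq_right_iff]
    intro hv; omega

lemma rep_colsum {ℓ : ℕ} (μ : Fin (ℓ-1) → ZMod 2) (c : Fin ℓ) :
    ∑ j, μ j * repCheck ℓ j c = ext0 μ c.val + if c.val = 0 then 0 else ext0 μ (c.val - 1) := by
  have key : ∀ j : Fin (ℓ-1), μ j * repCheck ℓ j c =
      (if j.val = c.val then μ j else 0) +
        (if c.val = 0 then 0 else if j.val = c.val - 1 then μ j else 0) := by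
    intro j
    simp only [repCheck, Matrix.of_apply, mul_ite, mul_one, mul_zero]
    split_ifs <;> (try simp) <;> omega
  rw [Finset.sum_congr rfl (fun j _ => key j), Finset.sum_add_distrib]
  congr 1
  · rw [sum_ite_val]; rfl
  · split_ifs with h
    · simp
    · rw [sum_ite_val]; rfl

lemma rep_inj {ℓ : ℕ} (β : Fin (ℓ-1) → ZMod 2)
    (h : ∀ c : Fin ℓ, ∑ j, β j * repCheck ℓ j c = 0) : ∀ j, β j = 0 := by
  have main : ∀ t (ht : t < ℓ - 1), β ⟨t, ht⟩ = 0 := by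
    intro t
    induction t with
    | zero =>
      intro ht
      have h0 := h ⟨0, by omega⟩
      rw [rep_colsum] at h0
      simpa [ext0, ht] using h0
    | succ t ih =>
      intro ht
      have h0 := h ⟨t + 1, by omega⟩
      rw [rep_colsum] at h0
      simp only [ext0] at h0
      rw [dif_pos ht] at h0
      have ht' : t < ℓ - 1 := by omega
      simpa [ht', ih ht'] using h0
  intro j
  have := main j.val j.isLt
  simpa using this

lemma rep_surj {ℓ : ℕ} (hℓ : 2 ≤ ℓ) (a : Fin ℓ → ZMod 2) (ha : ∑ c, a c = 0) :
    ∃ μ : Fin (ℓ-1) → ZMod 2, ∀ c, ∑ j, μ j * repCheck ℓ j c = a c := by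
  set S : ℕ → ZMod 2 := fun t => ∑ c ∈ univ.filter (fun c : Fin ℓ => c.val ≤ t), a c with hS
  have hstep : ∀ (c : Fin ℓ), 0 < c.val → S c.val = a c + S (c.val - 1) := by
    intro c hc
    have hins : (univ.filter fun c' : Fin ℓ => c'.val ≤ c.val) =
        insert c (univ.filter fun c' : Fin ℓ => c'.val ≤ c.val - 1) := by
      ext c'; simp [Fin.ext_iff]; omega
    rw [hS]
    simp only [hins]
    rw [Finset.sum_insert (by simp; omega)]
  have hfull : S (ℓ - 1) = 0 := by
    rw [hS, ← ha]
    apply Finset.sum_congr _ (fun _ _ => rfl)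
    ext c; simpa using (by omega : c.val ≤ ℓ - 1)
  refine ⟨fun j => S j.val, fun c => ?_⟩
  rw [rep_colsum]
  have hext : ∀ t, t < ℓ - 1 → ext0 (fun j : Fin (ℓ-1) => S j.val) t = S t := by
    intro t ht; simp [ext0, ht]
  rcases Nat.eq_zero_or_pos c.val with h0 | h0
  · -- c = 0
    have hc1 : c.val < ℓ - 1 := by omega
    rw [if_pos h0, hext _ hc1, h0, add_zero]
    have hsingle : (univ.filter fun c' : Fin ℓ => c'.val ≤ 0) = {c} := by
      ext c'; simp [Fin.ext_iff]; omega
    rw [hS]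
    simp only [hsingle, Finset.sum_singleton]
  · rw [if_neg (by omega)]
    rcases lt_or_ge c.val (ℓ - 1) with hlt | hge
    · rw [hext _ hlt, hext _ (by omega), hstep c h0, add_assoc, CharTwo.add_self_eq_zero,
        add_zero]
    · have hceq : c.val = ℓ - 1 := by omega
      have h1 : ¬ (c.val < ℓ - 1) := by omega
      rw [show ext0 (fun j : Fin (ℓ-1) => S j.val) c.val = 0 from dif_neg h1,
        hext _ (by omega : c.val - 1 < ℓ - 1), zero_add]
      have h2 : a c + S (c.val - 1) = 0 := by
        rw [← hstep c h0, hceq, hfull]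
      have h3 := CharTwo.add_self_eq_zero (a c)
      linear_combination h2 - h3


section Thick

lemma sum_if_eq {α β : Type*} [Fintype α] [DecidableEq α] [AddCommMonoid β] (a : α) (f : α → β) :
    (∑ x, if x = a then f x else 0) = f a := by
  rw [Finset.sum_ite_eq']; simp

variable {nX nZ n r nc : ℕ} (HX : Matrix (Fin nX) (Fin n) (ZMod 2))
  (HZ : Matrix (Fin nZ) (Fin n) (ZMod 2)) (HC : Matrix (Fin r) (Fin nc) (ZMod 2))

lemma thickX_mulVec (v : (Fin n × Fin nc) ⊕ (Fin nX × Fin r) → ZMod 2) (s : Fin nX × Fin nc) :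
    (thickX HX HC).mulVec v s =
      (∑ i, HX s.1 i * v (Sum.inl (i, s.2))) + ∑ j, HC j s.2 * v (Sum.inr (s.1, j)) := by
  rw [mulVec_eq_sum', Fintype.sum_sum_type]
  congr 1
  · rw [Fintype.sum_prod_type]
    apply Finset.sum_congr rfl
    intro i _
    have key : ∀ c : Fin nc, thickX HX HC s (Sum.inl (i,c)) * v (Sum.inl (i,c))
        = if c = s.2 then HX s.1 i * v (Sum.inl (i,c)) else 0 := by
      intro c
      rcases eq_or_ne c s.2 with h | h
      · subst h; simp [thickX]
      · simp [thickX, h, Ne.symm h]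
    rw [Finset.sum_congr rfl (fun c _ => key c), sum_if_eq]
  · rw [Fintype.sum_prod_type]
    have key : ∀ x : Fin nX, (∑ j, thickX HX HC s (Sum.inr (x,j)) * v (Sum.inr (x,j)))
        = if x = s.1 then ∑ j, HC j s.2 * v (Sum.inr (x,j)) else 0 := by
      intro x
      rcases eq_or_ne x s.1 with h | h
      · subst h; rw [if_pos rfl]; apply Finset.sum_congr rfl; intro j _; simp [thickX]
      · rw [if_neg h]; apply Finset.sum_eq_zero; intro j _; simp [thickX, h, Ne.symm h]
    rw [Finset.sum_congr rfl (fun x _ => key x), sum_if_eq]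

lemma thickZ_mulVec_inl (v : (Fin n × Fin nc) ⊕ (Fin nX × Fin r) → ZMod 2)
    (z : Fin nZ) (c : Fin nc) :
    (thickZ HX HZ HC).mulVec v (Sum.inl (z, c)) = ∑ i, HZ z i * v (Sum.inl (i, c)) := by
  rw [mulVec_eq_sum', Fintype.sum_sum_type]
  have h2 : (∑ p : Fin nX × Fin r,
      thickZ HX HZ HC (Sum.inl (z,c)) (Sum.inr p) * v (Sum.inr p)) = 0 := by
    apply Finset.sum_eq_zero; intro p _; simp [thickZ]
  rw [h2, add_zero, Fintype.sum_prod_type]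
  apply Finset.sum_congr rfl
  intro i _
  have key : ∀ c' : Fin nc, thickZ HX HZ HC (Sum.inl (z,c)) (Sum.inl (i,c')) * v (Sum.inl (i,c'))
      = if c' = c then HZ z i * v (Sum.inl (i,c')) else 0 := by
    intro c'
    rcases eq_or_ne c' c with h | h
    · subst h; simp [thickZ]
    · simp [thickZ, h, Ne.symm h]
  rw [Finset.sum_congr rfl (fun c' _ => key c'), sum_if_eq]

lemma thickZ_mulVec_inr (v : (Fin n × Fin nc) ⊕ (Fin nX × Fin r) → ZMod 2)
    (i : Fin n) (j : Fin r) :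
    (thickZ HX HZ HC).mulVec v (Sum.inr (i, j)) =
      (∑ c, HC j c * v (Sum.inl (i, c))) + ∑ x, HX x i * v (Sum.inr (x, j)) := by
  rw [mulVec_eq_sum', Fintype.sum_sum_type]
  congr 1
  · rw [Fintype.sum_prod_type]
    have key : ∀ i' : Fin n,
        (∑ c, thickZ HX HZ HC (Sum.inr (i,j)) (Sum.inl (i',c)) * v (Sum.inl (i',c)))
        = if i' = i then ∑ c, HC j c * v (Sum.inl (i',c)) else 0 := by
      intro i'
      rcases eq_or_ne i' i with h | h
      · subst h; rw [if_pos rfl]; apply Finset.sum_congr rfl; intro c _; simp [thickZ]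
      · rw [if_neg h]; apply Finset.sum_eq_zero; intro c _; simp [thickZ, h, Ne.symm h]
    rw [Finset.sum_congr rfl (fun i' _ => key i'), sum_if_eq]
  · rw [Fintype.sum_prod_type, Finset.sum_comm]
    have key : ∀ j' : Fin r,
        (∑ x, thickZ HX HZ HC (Sum.inr (i,j)) (Sum.inr (x,j')) * v (Sum.inr (x,j')))
        = if j' = j then ∑ x, HX x i * v (Sum.inr (x,j')) else 0 := by
      intro j'
      rcases eq_or_ne j' j with h | h
      · subst h; rw [if_pos rfl]; apply Finset.sum_congr rfl; intro x _; simp [thickZ]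
      · rw [if_neg h]; apply Finset.sum_eq_zero; intro x _; simp [thickZ, h, Ne.symm h]
    rw [Finset.sum_congr rfl (fun j' _ => key j'), sum_if_eq]

lemma mem_rowSpan_thickX_iff (v : (Fin n × Fin nc) ⊕ (Fin nX × Fin r) → ZMod 2) :
    v ∈ rowSpan (thickX HX HC) ↔ ∃ lam : Fin nX × Fin nc → ZMod 2,
      (∀ i c, v (Sum.inl (i, c)) = ∑ x, lam (x, c) * HX x i) ∧
      (∀ x j, v (Sum.inr (x, j)) = ∑ c, lam (x, c) * HC j c) := by
  rw [mem_rowSpan_iff]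
  have main : ∀ l : Fin nX × Fin nc → ZMod 2,
      (∀ i c, (∑ s : Fin nX × Fin nc, l s * thickX HX HC s (Sum.inl (i,c)))
        = ∑ x, l (x, c) * HX x i) ∧
      (∀ x j, (∑ s : Fin nX × Fin nc, l s * thickX HX HC s (Sum.inr (x,j)))
        = ∑ c, l (x, c) * HC j c) := by
    intro l
    constructor
    · intro i c
      rw [Fintype.sum_prod_type]
      apply Finset.sum_congr rfl
      intro x _
      have key : ∀ c' : Fin nc, l (x,c') * thickX HX HC (x,c') (Sum.inl (i,c))
          = if c' = c then l (x,c') * HX x i else 0 := by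
        intro c'
        rcases eq_or_ne c' c with h | h
        · subst h; simp [thickX]
        · simp [thickX, h, Ne.symm h]
      rw [Finset.sum_congr rfl (fun c' _ => key c'), sum_if_eq]
    · intro x j
      rw [Fintype.sum_prod_type]
      have key : ∀ x' : Fin nX, (∑ c, l (x',c) * thickX HX HC (x',c) (Sum.inr (x,j)))
          = if x' = x then ∑ c, l (x',c) * HC j c else 0 := by
        intro x'
        rcases eq_or_ne x' x with h | h
        · subst h; rw [if_pos rfl]; apply Finset.sum_congr rfl; intro c _; simp [thickX]
        · rw [if_neg h]; apply Finset.sum_eq_zero; intro c _; simp [thickX, h, Ne.symm h]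
      rw [Finset.sum_congr rfl (fun x' _ => key x'), sum_if_eq]
  constructor
  · rintro ⟨l, hl⟩
    exact ⟨l, fun i c => by rw [hl (Sum.inl (i,c)), (main l).1],
      fun x j => by rw [hl (Sum.inr (x,j)), (main l).2]⟩
  · rintro ⟨lam, h1, h2⟩
    refine ⟨lam, fun k => ?_⟩
    match k with
    | Sum.inl (i, c) => rw [h1 i c, (main lam).1]
    | Sum.inr (x, j) => rw [h2 x j, (main lam).2]

lemma mem_rowSpan_thickZ_iff (v : (Fin n × Fin nc) ⊕ (Fin nX × Fin r) → ZMod 2) :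
    v ∈ rowSpan (thickZ HX HZ HC) ↔ ∃ (lam : Fin nZ × Fin nc → ZMod 2)
      (mu : Fin n × Fin r → ZMod 2),
      (∀ i c, v (Sum.inl (i, c)) = (∑ z, lam (z, c) * HZ z i) + ∑ j, mu (i, j) * HC j c) ∧
      (∀ x j, v (Sum.inr (x, j)) = ∑ i, mu (i, j) * HX x i) := by
  rw [mem_rowSpan_iff]
  have main : ∀ (lam : Fin nZ × Fin nc → ZMod 2) (mu : Fin n × Fin r → ZMod 2),
      (∀ i c, (∑ s : (Fin nZ × Fin nc) ⊕ (Fin n × Fin r),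
          Sum.elim lam mu s * thickZ HX HZ HC s (Sum.inl (i,c)))
        = (∑ z, lam (z, c) * HZ z i) + ∑ j, mu (i, j) * HC j c) ∧
      (∀ x j, (∑ s : (Fin nZ × Fin nc) ⊕ (Fin n × Fin r),
          Sum.elim lam mu s * thickZ HX HZ HC s (Sum.inr (x,j)))
        = ∑ i, mu (i, j) * HX x i) := by
    intro lam mu
    constructor
    · intro i c
      rw [Fintype.sum_sum_type]
      congr 1
      · rw [Fintype.sum_prod_type]
        apply Finset.sum_congr rfl
        intro z _
        have key : ∀ c' : Fin nc,
            Sum.elim lam mu (Sum.inl (z,c')) * thickZ HX HZ HC (Sum.inl (z,c')) (Sum.inl (i,c))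
            = if c' = c then lam (z,c') * HZ z i else 0 := by
          intro c'
          rcases eq_or_ne c' c with h | h
          · subst h; simp [thickZ]
          · simp [thickZ, h, Ne.symm h]
        rw [Finset.sum_congr rfl (fun c' _ => key c'), sum_if_eq]
      · rw [Fintype.sum_prod_type]
        have key : ∀ i' : Fin n,
            (∑ j, Sum.elim lam mu (Sum.inr (i',j)) *
              thickZ HX HZ HC (Sum.inr (i',j)) (Sum.inl (i,c)))
            = if i' = i then ∑ j, mu (i',j) * HC j c else 0 := by
          intro i'
          rcases eq_or_ne i' i with h | h
          · subst h; rw [if_pos rfl]; apply Finset.sum_congr rfl; intro j _; simp [thickZ]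
          · rw [if_neg h]; apply Finset.sum_eq_zero; intro j _; simp [thickZ, h, Ne.symm h]
        rw [Finset.sum_congr rfl (fun i' _ => key i'), sum_if_eq]
    · intro x j
      rw [Fintype.sum_sum_type]
      have hz : (∑ p : Fin nZ × Fin nc,
          Sum.elim lam mu (Sum.inl p) * thickZ HX HZ HC (Sum.inl p) (Sum.inr (x,j))) = 0 := by
        apply Finset.sum_eq_zero
        rintro ⟨z, c⟩ _
        simp [thickZ]
      rw [hz, zero_add, Fintype.sum_prod_type]
      apply Finset.sum_congr rfl
      intro i _
      have key : ∀ j' : Fin r,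
          Sum.elim lam mu (Sum.inr (i,j')) * thickZ HX HZ HC (Sum.inr (i,j')) (Sum.inr (x,j))
          = if j' = j then mu (i,j') * HX x i else 0 := by
        intro j'
        rcases eq_or_ne j' j with h | h
        · subst h; simp [thickZ]
        · simp [thickZ, h, Ne.symm h]
      rw [Finset.sum_congr rfl (fun j' _ => key j'), sum_if_eq]
  constructor
  · rintro ⟨l, hl⟩
    refine ⟨fun p => l (Sum.inl p), fun p => l (Sum.inr p), fun i c => ?_, fun x j => ?_⟩
    · have := (main (fun p => l (Sum.inl p)) (fun p => l (Sum.inr p))).1 i c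
      rw [hl (Sum.inl (i,c)), ← this]
      apply Finset.sum_congr rfl
      rintro (p | p) _ <;> rfl
    · have := (main (fun p => l (Sum.inl p)) (fun p => l (Sum.inr p))).2 x j
      rw [hl (Sum.inr (x,j)), ← this]
      apply Finset.sum_congr rfl
      rintro (p | p) _ <;> rfl
  · rintro ⟨lam, mu, h1, h2⟩
    refine ⟨Sum.elim lam mu, fun k => ?_⟩
    match k with
    | Sum.inl (i, c) => rw [h1 i c, (main lam mu).1]
    | Sum.inr (x, j) => rw [h2 x j, (main lam mu).2]

end Thick


lemma two_zmod : (2 : ZMod 2) = 0 := by decide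

lemma char2_cancel {x y : ZMod 2} (h : x + y = 0) : x = y := by
  linear_combination h - two_zmod * y

section Main
variable {nX nZ n ℓ : ℕ}

lemma Z_embed (hℓ : 2 ≤ ℓ)
    (HX : Matrix (Fin nX) (Fin n) (ZMod 2)) (HZ : Matrix (Fin nZ) (Fin n) (ZMod 2))
    (v0 : Fin n → ZMod 2) (hker : HX.mulVec v0 = 0) (hspan : v0 ∉ rowSpan HZ) :
    ∃ w ∈ logicalSet (thickX HX (repCheck ℓ)) (thickZ HX HZ (repCheck ℓ)),
      hammingNorm w = hammingNorm v0 := by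
  have hℓpos : 0 < ℓ := by omega
  set c0 : Fin ℓ := ⟨0, hℓpos⟩ with hc0
  set w : (Fin n × Fin ℓ) ⊕ (Fin nX × Fin (ℓ-1)) → ZMod 2 :=
    Sum.elim (fun p => if p.2 = c0 then v0 p.1 else 0) (fun _ => 0) with hw
  refine ⟨w, ⟨?_, ?_⟩, ?_⟩
  · funext s
    rw [thickX_mulVec, Pi.zero_apply]
    have h2 : (∑ j, repCheck ℓ j s.2 * w (Sum.inr (s.1, j))) = 0 := by
      apply Finset.sum_eq_zero; intro j _; simp [hw]
    rw [h2, add_zero]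
    by_cases h : s.2 = c0
    · have he : ∀ i, w (Sum.inl (i, s.2)) = v0 i := fun i => by simp [hw, h]
      rw [Finset.sum_congr rfl fun i _ => by rw [he i]]
      have := congrFun hker s.1
      rwa [mulVec_eq_sum', Pi.zero_apply] at this
    · apply Finset.sum_eq_zero; intro i _; simp [hw, h]
  · intro hmem
    rw [mem_rowSpan_thickZ_iff] at hmem
    obtain ⟨lam, mu, h1, h2⟩ := hmem
    apply hspan
    rw [mem_rowSpan_iff]
    refine ⟨fun z => ∑ c, lam (z, c), fun i => ?_⟩
    have hsum : (∑ c, w (Sum.inl (i, c))) = v0 i := by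
      simp only [hw, Sum.elim_inl]
      rw [sum_if_eq c0 (fun _ => v0 i)]
    rw [← hsum, Finset.sum_congr rfl fun c _ => h1 i c, Finset.sum_add_distrib]
    have hR : (∑ c, ∑ j, mu (i,j) * repCheck ℓ j c) = 0 := by
      rw [Finset.sum_comm]
      apply Finset.sum_eq_zero; intro j _
      have hj1 : j.val < ℓ := by have := j.isLt; omega
      have hj2 : j.val + 1 < ℓ := by have := j.isLt; omega
      calc ∑ c, mu (i,j) * repCheck ℓ j c = ∑ c, repCheck ℓ j c * mu (i,j) := by
            apply Finset.sum_congr rfl; intros; ring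
      _ = mu (i,j) + mu (i,j) := rep_rowsum j (fun _ => mu (i,j)) hj1 hj2
      _ = 0 := CharTwo.add_self_eq_zero _
    rw [hR, add_zero, Finset.sum_comm]
    apply Finset.sum_congr rfl; intro z _
    rw [Finset.sum_mul]
  · rw [hn_eq, hn_eq, Fintype.sum_sum_type]
    have hb : (∑ p : Fin nX × Fin (ℓ-1), if w (Sum.inr p) ≠ 0 then 1 else 0) = 0 := by
      apply Finset.sum_eq_zero; intro p _; simp [hw]
    rw [hb, add_zero, Fintype.sum_prod_type]
    apply Finset.sum_congr rfl; intro i _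
    have key : ∀ c : Fin ℓ, (if w (Sum.inl (i,c)) ≠ 0 then 1 else 0)
        = if c = c0 then (if v0 i ≠ 0 then 1 else 0) else 0 := by
      intro c; rcases eq_or_ne c c0 with h | h <;> simp [hw, h]
    rw [Finset.sum_congr rfl fun c _ => key c, sum_if_eq]

lemma X_embed (hℓ : 2 ≤ ℓ)
    (HX : Matrix (Fin nX) (Fin n) (ZMod 2)) (HZ : Matrix (Fin nZ) (Fin n) (ZMod 2))
    (u : Fin n → ZMod 2) (hker : HZ.mulVec u = 0) (hspan : u ∉ rowSpan HX) :
    ∃ w ∈ logicalSet (thickZ HX HZ (repCheck ℓ)) (thickX HX (repCheck ℓ)),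
      hammingNorm w = ℓ * hammingNorm u := by
  have hℓpos : 0 < ℓ := by omega
  set w : (Fin n × Fin ℓ) ⊕ (Fin nX × Fin (ℓ-1)) → ZMod 2 :=
    Sum.elim (fun p => u p.1) (fun _ => 0) with hw
  refine ⟨w, ⟨?_, ?_⟩, ?_⟩
  · funext s
    rw [Pi.zero_apply]
    match s with
    | Sum.inl (z, c) =>
      rw [thickZ_mulVec_inl]
      have he : ∀ i, w (Sum.inl (i, c)) = u i := fun i => rfl
      rw [Finset.sum_congr rfl fun i _ => by rw [he i]]
      have := congrFun hker z
      rwa [mulVec_eq_sum', Pi.zero_apply] at this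
    | Sum.inr (i, j) =>
      rw [thickZ_mulVec_inr]
      have h2 : (∑ x, HX x i * w (Sum.inr (x, j))) = 0 := by
        apply Finset.sum_eq_zero; intro x _; simp [hw]
      rw [h2, add_zero]
      have hj1 : j.val < ℓ := by have := j.isLt; omega
      have hj2 : j.val + 1 < ℓ := by have := j.isLt; omega
      have := rep_rowsum j (fun c => w (Sum.inl (i, c))) hj1 hj2
      rw [this]
      exact CharTwo.add_self_eq_zero _
  · intro hmem
    rw [mem_rowSpan_thickX_iff] at hmem
    obtain ⟨lam, h1, h2⟩ := hmem
    apply hspan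
    rw [mem_rowSpan_iff]
    exact ⟨fun x => lam (x, ⟨0, hℓpos⟩), fun i => h1 i ⟨0, hℓpos⟩⟩
  · rw [hn_eq, hn_eq, Fintype.sum_sum_type]
    have hb : (∑ p : Fin nX × Fin (ℓ-1), if w (Sum.inr p) ≠ 0 then 1 else 0) = 0 := by
      apply Finset.sum_eq_zero; intro p _; simp [hw]
    rw [hb, add_zero, Fintype.sum_prod_type]
    calc (∑ i, ∑ _c : Fin ℓ, if w (Sum.inl (i, _c)) ≠ 0 then 1 else 0)
        = ∑ i : Fin n, ℓ * (if u i ≠ 0 then 1 else 0) := by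
          apply Finset.sum_congr rfl; intro i _
          have hconst : (∑ c : Fin ℓ, if w (Sum.inl (i,c)) ≠ 0 then 1 else 0)
              = ∑ _c : Fin ℓ, if u i ≠ 0 then (1:ℕ) else 0 :=
            Finset.sum_congr rfl fun c _ => rfl
          rw [hconst, Finset.sum_const, Finset.card_univ, Fintype.card_fin, smul_eq_mul]
    _ = ℓ * ∑ i : Fin n, (if u i ≠ 0 then 1 else 0) := by rw [Finset.mul_sum]


lemma Z_low (hℓ : 2 ≤ ℓ)
    (HX : Matrix (Fin nX) (Fin n) (ZMod 2)) (HZ : Matrix (Fin nZ) (Fin n) (ZMod 2))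
    (w : (Fin n × Fin ℓ) ⊕ (Fin nX × Fin (ℓ-1)) → ZMod 2)
    (hker : (thickX HX (repCheck ℓ)).mulVec w = 0)
    (hspan : w ∉ rowSpan (thickZ HX HZ (repCheck ℓ))) :
    ∃ v0, (HX.mulVec v0 = 0 ∧ v0 ∉ rowSpan HZ) ∧ hammingNorm v0 ≤ hammingNorm w := by
  have hℓpos : 0 < ℓ := by omega
  set a : Fin n → Fin ℓ → ZMod 2 := fun i c => w (Sum.inl (i,c)) with ha
  set b : Fin nX → Fin (ℓ-1) → ZMod 2 := fun x j => w (Sum.inr (x,j)) with hb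
  set abar : Fin n → ZMod 2 := fun i => ∑ c, a i c with habar
  have hkrel : ∀ (x : Fin nX) (c : Fin ℓ),
      (∑ i, HX x i * a i c) + (∑ j, repCheck ℓ j c * b x j) = 0 := by
    intro x c
    have := congrFun hker (x, c)
    rw [thickX_mulVec] at this
    simpa using this
  have hXabar : HX.mulVec abar = 0 := by
    funext x
    rw [mulVec_eq_sum', Pi.zero_apply]
    calc ∑ i, HX x i * abar i = ∑ i, ∑ c, HX x i * a i c := by
          apply Finset.sum_congr rfl; intro i _; rw [habar]; exact Finset.mul_sum _ _ _
    _ = ∑ c, ∑ i, HX x i * a i c := Finset.sum_comm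
    _ = ∑ c, ∑ j, repCheck ℓ j c * b x j := by
          apply Finset.sum_congr rfl; intro c _
          exact char2_cancel (hkrel x c)
    _ = ∑ j, ∑ c, repCheck ℓ j c * b x j := Finset.sum_comm
    _ = 0 := by
          apply Finset.sum_eq_zero; intro j _
          have hj1 : j.val < ℓ := by have := j.isLt; omega
          have hj2 : j.val + 1 < ℓ := by have := j.isLt; omega
          rw [rep_rowsum j (fun _ => b x j) hj1 hj2]
          exact CharTwo.add_self_eq_zero _
  have habar_span : abar ∉ rowSpan HZ := by
    intro hmem
    apply hspan
    rw [mem_rowSpan_iff] at hmem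
    obtain ⟨lam0, hlam0⟩ := hmem
    set clast : Fin ℓ := ⟨ℓ-1, by omega⟩ with hclast
    set a' : Fin n → Fin ℓ → ZMod 2 :=
      fun i c => a i c + if c = clast then abar i else 0 with ha'
    have hsum0 : ∀ i, ∑ c, a' i c = 0 := by
      intro i
      rw [ha']
      rw [Finset.sum_add_distrib, sum_if_eq clast (fun _ => abar i)]
      exact CharTwo.add_self_eq_zero _
    choose mu hmu using fun i => rep_surj hℓ (a' i) (hsum0 i)
    rw [mem_rowSpan_thickZ_iff]
    refine ⟨fun p => if p.2 = clast then lam0 p.1 else 0, fun p => mu p.1 p.2, ?_, ?_⟩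
    · intro i c
      show a i c = _
      have hz : (∑ z, (if c = clast then lam0 z else 0) * HZ z i)
          = if c = clast then abar i else 0 := by
        rcases eq_or_ne c clast with h | h
        · rw [if_pos h]
          rw [Finset.sum_congr rfl fun z (_ : z ∈ (univ : Finset (Fin nZ))) => by rw [if_pos h]]
          exact (hlam0 i).symm
        · rw [if_neg h]
          apply Finset.sum_eq_zero; intro z _; rw [if_neg h, zero_mul]
      rw [hz, hmu i c]
      simp only [ha']
      linear_combination - two_zmod * (if c = clast then abar i else 0)
    · intro x j
      show b x j = _
      have hc : ∀ c : Fin ℓ,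
          ∑ j', (b x j' + ∑ i, mu i j' * HX x i) * repCheck ℓ j' c = 0 := by
        intro c
        have expand : ∀ j' : Fin (ℓ-1), (b x j' + ∑ i, mu i j' * HX x i) * repCheck ℓ j' c
            = repCheck ℓ j' c * b x j' + ∑ i, (mu i j' * repCheck ℓ j' c) * HX x i := by
          intro j'
          rw [add_mul, Finset.sum_mul]
          congr 1
          · ring
          · apply Finset.sum_congr rfl; intros; ring
        rw [Finset.sum_congr rfl fun j' _ => expand j', Finset.sum_add_distrib]
        have p1 : (∑ j', repCheck ℓ j' c * b x j') = ∑ i, HX x i * a i c :=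
          char2_cancel (by rw [add_comm]; exact hkrel x c)
        have p2 : (∑ j', ∑ i, (mu i j' * repCheck ℓ j' c) * HX x i)
            = ∑ i, HX x i * a' i c := by
          rw [Finset.sum_comm]
          apply Finset.sum_congr rfl; intro i _
          calc ∑ j', (mu i j' * repCheck ℓ j' c) * HX x i
              = (∑ j', mu i j' * repCheck ℓ j' c) * HX x i := (Finset.sum_mul _ _ _).symm
          _ = a' i c * HX x i := by rw [hmu]
          _ = HX x i * a' i c := mul_comm _ _
        rw [p1, p2, ← Finset.sum_add_distrib]
        have hpt : ∀ i, HX x i * a i c + HX x i * a' i c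
            = if c = clast then HX x i * abar i else 0 := by
          intro i
          simp only [ha']
          rcases eq_or_ne c clast with h | h
          · rw [if_pos h, if_pos h]
            linear_combination two_zmod * (HX x i * a i c)
          · rw [if_neg h, if_neg h, add_zero]
            linear_combination two_zmod * (HX x i * a i c)
        rw [Finset.sum_congr rfl fun i _ => hpt i]
        rcases eq_or_ne c clast with h | h
        · rw [Finset.sum_congr rfl fun i (_ : i ∈ (univ : Finset (Fin n))) => if_pos h]
          have := congrFun hXabar x
          rwa [mulVec_eq_sum', Pi.zero_apply] at this
        · apply Finset.sum_eq_zero; intro i _; rw [if_neg h]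
      have key := rep_inj (fun j' => b x j' + ∑ i, mu i j' * HX x i) hc
      exact char2_cancel (key j)
  refine ⟨abar, ⟨hXabar, habar_span⟩, ?_⟩
  rw [hn_eq, hn_eq, Fintype.sum_sum_type, Fintype.sum_prod_type]
  calc (∑ i, if abar i ≠ 0 then 1 else 0)
      ≤ ∑ i, ∑ c, if a i c ≠ 0 then 1 else 0 :=
        Finset.sum_le_sum fun i _ => ind_sum_le (a i)
  _ ≤ _ := Nat.le_add_right _ _


lemma X_low (hℓ : 2 ≤ ℓ)
    (HX : Matrix (Fin nX) (Fin n) (ZMod 2)) (HZ : Matrix (Fin nZ) (Fin n) (ZMod 2))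
    (w : (Fin n × Fin ℓ) ⊕ (Fin nX × Fin (ℓ-1)) → ZMod 2)
    (hker : (thickZ HX HZ (repCheck ℓ)).mulVec w = 0)
    (hspan : w ∉ rowSpan (thickX HX (repCheck ℓ))) :
    ℓ * minWt (logicalSet HZ HX) ≤ hammingNorm w := by
  have hℓpos : 0 < ℓ := by omega
  set a : Fin ℓ → Fin n → ZMod 2 := fun c i => w (Sum.inl (i,c)) with ha
  set b : Fin nX → Fin (ℓ-1) → ZMod 2 := fun x j => w (Sum.inr (x,j)) with hb
  have hk1 : ∀ (z : Fin nZ) (c : Fin ℓ), ∑ i, HZ z i * a c i = 0 := by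
    intro z c
    have := congrFun hker (Sum.inl (z,c))
    rwa [thickZ_mulVec_inl, Pi.zero_apply] at this
  have hk2 : ∀ (i : Fin n) (j : Fin (ℓ-1)),
      (∑ c, repCheck ℓ j c * a c i) + ∑ x, HX x i * b x j = 0 := by
    intro i j
    have := congrFun hker (Sum.inr (i,j))
    rwa [thickZ_mulVec_inr, Pi.zero_apply] at this
  have hstep : ∀ (j : Fin (ℓ-1)) (h1 : j.val < ℓ) (h2 : j.val + 1 < ℓ) (i : Fin n),
      a ⟨j.val, h1⟩ i + a ⟨j.val+1, h2⟩ i = ∑ x, b x j * HX x i := by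
    intro j h1 h2 i
    have hr := hk2 i j
    rw [rep_rowsum j (fun c => a c i) h1 h2] at hr
    have comm : (∑ x, HX x i * b x j) = ∑ x, b x j * HX x i := by
      apply Finset.sum_congr rfl; intros; ring
    rw [comm] at hr
    exact char2_cancel hr
  have hmemHX : ∀ (j : Fin (ℓ-1)), (fun i => ∑ x, b x j * HX x i) ∈ rowSpan HX := by
    intro j
    rw [mem_rowSpan_iff]
    exact ⟨fun x => b x j, fun i => rfl⟩
  have hcong : ∀ (t : ℕ) (h : t < ℓ),
      (fun i => a ⟨t,h⟩ i + a ⟨0,hℓpos⟩ i) ∈ rowSpan HX := by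
    intro t
    induction t with
    | zero =>
      intro h
      have hz : (fun i => a ⟨0,h⟩ i + a ⟨0,hℓpos⟩ i) = (0 : Fin n → ZMod 2) := by
        funext i; exact CharTwo.add_self_eq_zero _
      rw [hz]; exact Submodule.zero_mem _
    | succ t ih =>
      intro h
      have ht : t < ℓ := by omega
      have htr : t < ℓ - 1 := by omega
      have he : (fun i => a ⟨t+1,h⟩ i + a ⟨0,hℓpos⟩ i)
          = (fun i => (a ⟨t,ht⟩ i + a ⟨0,hℓpos⟩ i) + ∑ x, b x ⟨t,htr⟩ * HX x i) := by
        funext i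
        have hs := hstep ⟨t,htr⟩ ht h i
        linear_combination hs - two_zmod * (a ⟨t,ht⟩ i)
      rw [he]
      exact Submodule.add_mem _ (ih ht) (hmemHX ⟨t,htr⟩)
  have hnot : ∀ c : Fin ℓ, a c ∉ rowSpan HX := by
    intro cstar hcstar
    apply hspan
    have h0 : a ⟨0,hℓpos⟩ ∈ rowSpan HX := by
      have hcc := hcong cstar.val cstar.isLt
      have he : a ⟨0,hℓpos⟩
          = a cstar + fun i => a ⟨cstar.val, cstar.isLt⟩ i + a ⟨0,hℓpos⟩ i := by
        funext i
        show a ⟨0,hℓpos⟩ i = a cstar i + (a ⟨cstar.val, cstar.isLt⟩ i + a ⟨0,hℓpos⟩ i)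
        have hee : (⟨cstar.val, cstar.isLt⟩ : Fin ℓ) = cstar := rfl
        rw [hee]
        linear_combination - two_zmod * (a cstar i)
      rw [he]
      exact Submodule.add_mem _ hcstar hcc
    rw [mem_rowSpan_iff] at h0
    obtain ⟨lam0, hlam0⟩ := h0
    set bext : Fin nX → ℕ → ZMod 2 :=
      fun x t => if h : t < ℓ-1 then b x ⟨t,h⟩ else 0 with hbext
    set L : ℕ → Fin nX → ZMod 2 :=
      fun t x => lam0 x + ∑ t' ∈ Finset.range t, bext x t' with hL
    have hLsucc : ∀ t x, L (t+1) x = L t x + bext x t := by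
      intro t x
      rw [hL]
      simp only []
      rw [Finset.sum_range_succ, add_assoc]
    have claim : ∀ (t : ℕ) (h : t < ℓ) (i : Fin n), a ⟨t,h⟩ i = ∑ x, L t x * HX x i := by
      intro t
      induction t with
      | zero =>
        intro h i
        have h1 := hlam0 i
        have h2 : (∑ x, lam0 x * HX x i) = ∑ x, L 0 x * HX x i :=
          Finset.sum_congr rfl (fun x _ => by rw [hL]; simp)
        exact h1.trans h2
      | succ t ih =>
        intro h i
        have ht : t < ℓ := by omega
        have htr : t < ℓ - 1 := by omega
        have hb' : (∑ x, b x ⟨t,htr⟩ * HX x i) = ∑ x, bext x t * HX x i := by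
          apply Finset.sum_congr rfl; intro x _; simp only [hbext]; rw [dif_pos htr]
        calc a ⟨t+1,h⟩ i = a ⟨t,ht⟩ i + (a ⟨t,ht⟩ i + a ⟨t+1,h⟩ i) := by
              linear_combination - two_zmod * (a ⟨t,ht⟩ i)
        _ = a ⟨t,ht⟩ i + ∑ x, b x ⟨t,htr⟩ * HX x i := by rw [hstep ⟨t,htr⟩ ht h i]
        _ = (∑ x, L t x * HX x i) + ∑ x, bext x t * HX x i := by rw [ih ht i, hb']
        _ = ∑ x, (L t x + bext x t) * HX x i := by
              rw [← Finset.sum_add_distrib]; apply Finset.sum_congr rfl; intros; ring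
        _ = ∑ x, L (t+1) x * HX x i := by
              apply Finset.sum_congr rfl; intro x _; rw [hLsucc]
    rw [mem_rowSpan_thickX_iff]
    refine ⟨fun p => L p.2.val p.1, fun i c => ?_, fun x j => ?_⟩
    · exact claim c.val c.isLt i
    · show b x j = _
      have hj1 : j.val < ℓ := by have := j.isLt; omega
      have hj2 : j.val + 1 < ℓ := by have := j.isLt; omega
      have hcomm : (∑ c : Fin ℓ, L c.val x * repCheck ℓ j c)
          = ∑ c, repCheck ℓ j c * (fun c' : Fin ℓ => L c'.val x) c := by
        apply Finset.sum_congr rfl; intros; ring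
      have hfin : (∑ c : Fin ℓ, L c.val x * repCheck ℓ j c) = b x j := by
        rw [hcomm, rep_rowsum j (fun c' : Fin ℓ => L c'.val x) hj1 hj2]
        show L j.val x + L (j.val + 1) x = b x j
        rw [hLsucc]
        simp only [hbext]
        rw [dif_pos j.isLt]
        linear_combination two_zmod * (L j.val x)
      exact hfin.symm
  have hd : ∀ c : Fin ℓ, minWt (logicalSet HZ HX) ≤ ∑ i, if a c i ≠ 0 then 1 else 0 := by
    intro c
    have hmem : a c ∈ logicalSet HZ HX := by
      refine ⟨funext fun z => ?_, hnot c⟩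
      rw [mulVec_eq_sum']
      exact hk1 z c
    calc minWt (logicalSet HZ HX) ≤ hammingNorm (a c) := Nat.sInf_le ⟨a c, hmem, rfl⟩
    _ = _ := hn_eq (a c)
  rw [hn_eq, Fintype.sum_sum_type, Fintype.sum_prod_type]
  calc ℓ * minWt (logicalSet HZ HX) = ∑ _c : Fin ℓ, minWt (logicalSet HZ HX) := by
        rw [Finset.sum_const, Finset.card_univ, Fintype.card_fin, smul_eq_mul]
  _ ≤ ∑ c : Fin ℓ, ∑ i, if a c i ≠ 0 then 1 else 0 := Finset.sum_le_sum fun c _ => hd c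
  _ = ∑ i, ∑ c, if a c i ≠ 0 then 1 else 0 := Finset.sum_comm
  _ ≤ _ := Nat.le_add_right _ _

end Main

/-- **Thickening with the `[ℓ,1,ℓ]` repetition code** multiplies the X distance by `ℓ`
and preserves the Z distance. -/
theorem repetition_thickening_distances {nX nZ n ℓ : ℕ} (hℓ : 2 ≤ ℓ)
    (HX : Matrix (Fin nX) (Fin n) (ZMod 2)) (HZ : Matrix (Fin nZ) (Fin n) (ZMod 2))
    (hcss : HX * HZ.transpose = 0)
    (hXlog : (logicalSet HZ HX).Nonempty) (hZlog : (logicalSet HX HZ).Nonempty) :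
    minWt (logicalSet (thickZ HX HZ (repCheck ℓ)) (thickX HX (repCheck ℓ))) =
        ℓ * minWt (logicalSet HZ HX) ∧
      minWt (logicalSet (thickX HX (repCheck ℓ)) (thickZ HX HZ (repCheck ℓ))) =
        minWt (logicalSet HX HZ) := by
  obtain ⟨uX, huX⟩ := hXlog
  obtain ⟨vZ, hvZ⟩ := hZlog
  have hXim : (hammingNorm '' logicalSet HZ HX).Nonempty := ⟨hammingNorm uX, uX, huX, rfl⟩
  have hZim : (hammingNorm '' logicalSet HX HZ).Nonempty := ⟨hammingNorm vZ, vZ, hvZ, rfl⟩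
  obtain ⟨u0, hu0mem, hu0⟩ := Nat.sInf_mem hXim
  obtain ⟨v0, hv0mem, hv0⟩ := Nat.sInf_mem hZim
  constructor
  · obtain ⟨wx, hwxmem, hwxnorm⟩ := X_embed hℓ HX HZ u0 hu0mem.1 hu0mem.2
    have hwx : hammingNorm wx = ℓ * minWt (logicalSet HZ HX) := by rw [hwxnorm, hu0]; rfl
    apply le_antisymm
    · calc minWt (logicalSet (thickZ HX HZ (repCheck ℓ)) (thickX HX (repCheck ℓ)))
          ≤ hammingNorm wx := Nat.sInf_le ⟨wx, hwxmem, rfl⟩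
      _ = ℓ * minWt (logicalSet HZ HX) := hwx
    · refine le_csInf ⟨hammingNorm wx, wx, hwxmem, rfl⟩ ?_
      rintro m ⟨w', hw', rfl⟩
      exact X_low hℓ HX HZ w' hw'.1 hw'.2
  · obtain ⟨wz, hwzmem, hwznorm⟩ := Z_embed hℓ HX HZ v0 hv0mem.1 hv0mem.2
    have hwz : hammingNorm wz = minWt (logicalSet HX HZ) := by rw [hwznorm, hv0]; rfl
    apply le_antisymm
    · calc minWt (logicalSet (thickX HX (repCheck ℓ)) (thickZ HX HZ (repCheck ℓ)))
          ≤ hammingNorm wz := Nat.sInf_le ⟨wz, hwzmem, rfl⟩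
      _ = minWt (logicalSet HX HZ) := hwz
    · refine le_csInf ⟨hammingNorm wz, wz, hwzmem, rfl⟩ ?_
      rintro m ⟨w', hw', rfl⟩
      obtain ⟨v1, hv1, hle⟩ := Z_low hℓ HX HZ w' hw'.1 hw'.2
      exact le_trans (Nat.sInf_le ⟨v1, hv1, rfl⟩) hle
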